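/- arXiv:2507.09605 — 2 statements merged into one kernel-verified Lean document; each statement's English description precedes it below -/
import Mathlib

section
/- Let L be a set of distinct lines in F_q^n such that at most 2q lines of L lie in any common 2-plane and |L| ≤ 3q². Let X ⊆ F_q^n satisfy |l ∩ X| ≥ q/200 for every l ∈ L. Then |X| ≥ c·|L|·q^{1/2} for an absolute constant c > 0. -/
/-!
Write `q = |F|` and `I = ∑_{l ∈ L} |l ∩ X| ≥ |L| q / 200`. Since distinct lines share at most
one point, Cauchy–Schwarz over the points of `X` gives `I² ≤ |X| (I + |L| M)`, where `M` is the
largest number of lines of `L` meeting a single line `l₀ ∈ L` (the hairbrush with stem `l₀`).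

Each line of the hairbrush spans a 2-plane with `l₀`, and distinct 2-planes through `l₀` are
disjoint off `l₀`. A plane holds at most `2q` lines of `L`, each with `≳ q` points of `X` off `l₀`,
and the same Cauchy–Schwarz argument inside the plane shows that `k` such lines cover `≳ k q` of
these points. Summing over the planes gives `|X| ≳ q M`, hence
`|X|² ≳ q I² / |L| ≳ |L| q³ ≥ |L|² q / 3`.
-/

open Finset

def IsLine (F : Type*) [Field F] {n : ℕ} (l : Set (Fin n → F)) : Prop :=
  ∃ a v : Fin n → F, v ≠ 0 ∧ l = {x | ∃ t : F, x = a + t • v}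

def IsFlat (F : Type*) [Field F] {n : ℕ} (d : ℕ) (S : Set (Fin n → F)) : Prop :=
  ∃ (a : Fin n → F) (W : Submodule F (Fin n → F)),
    Module.finrank F W = d ∧ S = {x | x - a ∈ W}

section Geometry

variable {F V : Type*} [Field F] [AddCommGroup V] [Module F V] {n : ℕ}

lemma setOf_add_smul_smul_eq (x v : V) {c : F} (hc : c ≠ 0) :
    {y | ∃ t : F, y = x + t • (c • v)} = {y | ∃ t : F, y = x + t • v} := by
  ext y
  constructor
  · rintro ⟨t, rfl⟩
    exact ⟨t * c, by rw [smul_smul]⟩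
  · rintro ⟨t, rfl⟩
    exact ⟨t * c⁻¹, by rw [smul_smul, inv_mul_cancel_right₀ hc]⟩

lemma Submodule.setOf_sub_mem_eq {W : Submodule F V} {a b : V}
    (h : a - b ∈ W) : {y | y - b ∈ W} = {y | y - a ∈ W} := by
  ext y
  change y - b ∈ W ↔ y - a ∈ W
  rw [show y - a = (y - b) - (a - b) by abel, W.sub_mem_iff_left h]

lemma IsLine.eq_setOf_of_mem {l : Set (Fin n → F)} (hl : IsLine F l) {x : Fin n → F}
    (hx : x ∈ l) : ∃ v ≠ 0, l = {y | ∃ t : F, y = x + t • v} := by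
  obtain ⟨a, v, hv, rfl⟩ := hl
  obtain ⟨s, rfl⟩ := hx
  refine ⟨v, hv, Set.ext fun y => ⟨?_, ?_⟩⟩
  · rintro ⟨t, rfl⟩
    exact ⟨t - s, by module⟩
  · rintro ⟨t, rfl⟩
    exact ⟨s + t, by module⟩

lemma IsLine.eq_setOf_of_mem_of_ne {l : Set (Fin n → F)} (hl : IsLine F l) {x y : Fin n → F}
    (hx : x ∈ l) (hy : y ∈ l) (hxy : x ≠ y) : l = {z | ∃ t : F, z = x + t • (y - x)} := by
  obtain ⟨v, -, rfl⟩ := hl.eq_setOf_of_mem hx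
  obtain ⟨s, rfl⟩ := hy
  have hs : s ≠ 0 := by
    rintro rfl
    simp at hxy
  rw [add_sub_cancel_left, setOf_add_smul_smul_eq x v hs]

lemma IsLine.inter_subsingleton {l₁ l₂ : Set (Fin n → F)} (h₁ : IsLine F l₁) (h₂ : IsLine F l₂)
    (hne : l₁ ≠ l₂) : (l₁ ∩ l₂).Subsingleton := by
  rintro x ⟨hx₁, hx₂⟩ y ⟨hy₁, hy₂⟩
  by_contra hxy
  exact hne ((h₁.eq_setOf_of_mem_of_ne hx₁ hy₁ hxy).trans
    (h₂.eq_setOf_of_mem_of_ne hx₂ hy₂ hxy).symm)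

lemma finrank_span_range_pair {u v : V} (h : LinearIndependent F ![u, v]) :
    Module.finrank F (Submodule.span F (Set.range ![u, v])) = 2 := by
  simpa using finrank_span_eq_card h

lemma IsLine.exists_isFlat_two {l₁ l₂ : Set (Fin n → F)} (h₁ : IsLine F l₁) (h₂ : IsLine F l₂)
    (hne : l₁ ≠ l₂) {x : Fin n → F} (hx₁ : x ∈ l₁) (hx₂ : x ∈ l₂) :
    ∃ π, IsFlat F 2 π ∧ l₁ ⊆ π ∧ l₂ ⊆ π := by
  obtain ⟨v₁, hv₁, rfl⟩ := h₁.eq_setOf_of_mem hx₁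
  obtain ⟨v₂, hv₂, rfl⟩ := h₂.eq_setOf_of_mem hx₂
  have hind : LinearIndependent F ![v₁, v₂] := by
    refine (LinearIndependent.pair_iff' hv₁).2 fun c hc => hne ?_
    have hc0 : c ≠ 0 := by
      rintro rfl
      exact hv₂ (by simpa using hc.symm)
    rw [← hc, setOf_add_smul_smul_eq x v₁ hc0]
  refine ⟨{y | y - x ∈ Submodule.span F (Set.range ![v₁, v₂])},
    ⟨x, _, finrank_span_range_pair hind, rfl⟩, ?_, ?_⟩
  · rintro _ ⟨t, rfl⟩
    simpa using Submodule.smul_mem _ t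
      (Submodule.subset_span (Set.mem_range_self (f := ![v₁, v₂]) 0))
  · rintro _ ⟨t, rfl⟩
    simpa using Submodule.smul_mem _ t
      (Submodule.subset_span (Set.mem_range_self (f := ![v₁, v₂]) 1))

lemma IsFlat.eq_of_isLine_subset {π : Set (Fin n → F)} (hπ : IsFlat F 2 π) {a v z : Fin n → F}
    (hv : v ≠ 0) (hlπ : {y | ∃ t : F, y = a + t • v} ⊆ π) (hz : z ∈ π)
    (hzl : z ∉ {y | ∃ t : F, y = a + t • v}) :
    π = {y | y - a ∈ Submodule.span F (Set.range ![v, z - a])} := by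
  obtain ⟨b, W, hW, rfl⟩ := hπ
  have ha : a - b ∈ W := hlπ ⟨0, by simp⟩
  rw [W.setOf_sub_mem_eq ha] at hlπ hz ⊢
  have hvW : v ∈ W := by simpa using hlπ ⟨1, rfl⟩
  have hind : LinearIndependent F ![v, z - a] :=
    (LinearIndependent.pair_iff' hv).2 fun c hc => hzl ⟨c, by rw [hc]; abel⟩
  have : FiniteDimensional F W := Module.finite_of_finrank_eq_succ hW
  rw [Submodule.eq_of_le_of_finrank_eq (S₁ := Submodule.span F (Set.range ![v, z - a])) (S₂ := W)
    (Submodule.span_le.2 (Set.range_subset_iff.2 fun i => by fin_cases i <;> simpa))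
    (by rw [finrank_span_range_pair hind, hW])]

lemma IsFlat.eq_of_isLine_subset_of_mem {l π₁ π₂ : Set (Fin n → F)} (hl : IsLine F l)
    (h₁ : IsFlat F 2 π₁) (h₂ : IsFlat F 2 π₂) (hl₁ : l ⊆ π₁) (hl₂ : l ⊆ π₂) {z : Fin n → F}
    (hz₁ : z ∈ π₁) (hz₂ : z ∈ π₂) (hzl : z ∉ l) : π₁ = π₂ := by
  obtain ⟨a, v, hv, rfl⟩ := hl
  rw [h₁.eq_of_isLine_subset hv hl₁ hz₁ hzl, h₂.eq_of_isLine_subset hv hl₂ hz₂ hzl]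

end Geometry

section Incidence

variable {α : Type*}

open Classical in
noncomputable def hairbrush (L : Finset (Set α)) (l : Set α) : Finset (Set α) :=
  {l' ∈ L.erase l | (l ∩ l').Nonempty}

@[simp]
lemma mem_hairbrush {L : Finset (Set α)} {l l' : Set α} :
    l' ∈ hairbrush L l ↔ l' ∈ L ∧ l' ≠ l ∧ (l ∩ l').Nonempty := by
  simp only [hairbrush, mem_filter, mem_erase]
  tauto

lemma hairbrush_subset (L : Finset (Set α)) (l : Set α) : hairbrush L l ⊆ L :=
  fun _ h => (mem_hairbrush.1 h).1

lemma ncard_inter_le_ncard_inter_diff_add_one [Finite α] {l l₀ : Set α}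
    (h : (l ∩ l₀).Subsingleton) (X : Set α) : (l ∩ X).ncard ≤ (l ∩ (X \ l₀)).ncard + 1 :=
  calc (l ∩ X).ncard ≤ (l ∩ (X \ l₀) ∪ l ∩ l₀).ncard :=
        Set.ncard_le_ncard fun y ⟨hyl, hyX⟩ => by by_cases hy : y ∈ l₀ <;> simp [*]
    _ ≤ (l ∩ (X \ l₀)).ncard + (l ∩ l₀).ncard := Set.ncard_union_le _ _
    _ ≤ (l ∩ (X \ l₀)).ncard + 1 := by gcongr; exact Set.ncard_le_one_iff_subsingleton.2 h

variable [Fintype α]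

theorem sq_sum_ncard_inter_le (T : Finset (Set α)) (Y : Set α)
    (hT : ∀ l ∈ T, ∀ l' ∈ T, l ≠ l' → (l ∩ l').Subsingleton) :
    (∑ l ∈ T, (l ∩ Y).ncard) ^ 2 ≤ Y.ncard * ∑ l ∈ T, ((l ∩ Y).ncard + #(hairbrush T l)) := by
  classical
  set S := Y.toFinset
  have hcount : ∀ s : Set α, (s ∩ Y).ncard = #{y ∈ S | y ∈ s} := fun s => by
    rw [Set.ncard_eq_toFinset_card']
    congr 1
    ext y
    simp [S, and_comm]
  set d : α → ℕ := fun y => #{l ∈ T | y ∈ l}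
  have hsum : ∑ l ∈ T, (l ∩ Y).ncard = ∑ y ∈ S, d y := by
    simp_rw [hcount]
    exact sum_card_bipartiteAbove_eq_sum_card_bipartiteBelow fun l y => y ∈ l
  have hsq : ∑ y ∈ S, d y ^ 2 = ∑ l ∈ T, ∑ l' ∈ T, (l ∩ l' ∩ Y).ncard := by
    simp_rw [hcount, d, sq, card_filter, sum_mul_sum, ite_zero_mul_ite_zero, mul_one]
    rw [sum_comm]
    refine sum_congr rfl fun l _ => ?_
    rw [sum_comm]
    simp only [Set.mem_inter_iff]
  have hrow : ∀ l ∈ T, ∑ l' ∈ T, (l ∩ l' ∩ Y).ncard ≤ (l ∩ Y).ncard + #(hairbrush T l) := by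
    intro l hl
    rw [← add_sum_erase _ _ hl, Set.inter_self, hairbrush, card_filter]
    gcongr with l' hl'
    split_ifs with hmeet
    · exact (Set.ncard_le_ncard Set.inter_subset_left).trans <|
        Set.ncard_le_one_iff_subsingleton.2 <|
          hT l hl l' (mem_of_mem_erase hl') (ne_of_mem_erase hl').symm
    · simp [Set.not_nonempty_iff_eq_empty.1 hmeet]
  calc (∑ l ∈ T, (l ∩ Y).ncard) ^ 2 = (∑ y ∈ S, d y) ^ 2 := by rw [hsum]
    _ ≤ #S * ∑ y ∈ S, d y ^ 2 := sq_sum_le_card_mul_sum_sq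
    _ = Y.ncard * ∑ l ∈ T, ∑ l' ∈ T, (l ∩ l' ∩ Y).ncard := by
        rw [Set.ncard_eq_toFinset_card', hsq]
    _ ≤ Y.ncard * ∑ l ∈ T, ((l ∩ Y).ncard + #(hairbrush T l)) := by
        gcongr with l hl
        exact hrow l hl

theorem sq_mul_card_le_of_inter_subsingleton {β : ℝ} {K : ℕ} (T : Finset (Set α)) (Y : Set α)
    (hT : ∀ l ∈ T, ∀ l' ∈ T, l ≠ l' → (l ∩ l').Subsingleton) (hTK : #T ≤ K)
    (hβ : 0 ≤ β) (hβK : β ≤ K) (hY : ∀ l ∈ T, β ≤ (l ∩ Y).ncard) :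
    β ^ 2 * #T ≤ 2 * K * Y.ncard := by
  set I := ∑ l ∈ T, (l ∩ Y).ncard
  have hI : β * #T ≤ I := by
    have := card_nsmul_le_sum T (fun l => ((l ∩ Y).ncard : ℝ)) β hY
    rw [nsmul_eq_mul] at this
    push_cast [I]
    linarith
  have hCS : (I : ℝ) ^ 2 ≤ Y.ncard * (I + #T * #T) := by
    have hbrush : ∑ l ∈ T, ((l ∩ Y).ncard + #(hairbrush T l)) ≤ I + #T * #T := by
      rw [sum_add_distrib]
      gcongr
      calc ∑ l ∈ T, #(hairbrush T l) ≤ ∑ _l ∈ T, #T :=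
            sum_le_sum fun l _ => card_le_card (hairbrush_subset T l)
        _ = #T * #T := by rw [sum_const, smul_eq_mul]
    exact_mod_cast (sq_sum_ncard_inter_le T Y hT).trans (Nat.mul_le_mul_left _ hbrush)
  have hTK' : (#T : ℝ) ≤ K := by exact_mod_cast hTK
  have hP : (0 : ℝ) ≤ Y.ncard := Nat.cast_nonneg _
  have hk : (0 : ℝ) ≤ #T := Nat.cast_nonneg _
  -- Either `I ≤ 2|Y|` or `I ^ 2 ≤ 2 |Y| |T| ^ 2`, according to which summand of `hCS` dominates.
  rcases le_or_gt ((#T : ℝ) * #T) I with h | h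
  · have : β * #T ≤ 2 * Y.ncard := by nlinarith
    nlinarith
  · have hk0 : (0 : ℝ) < #T := by nlinarith
    have hsq : (β * #T) ^ 2 ≤ I ^ 2 := pow_le_pow_left₀ (by positivity) hI 2
    have : β ^ 2 * (#T * #T) ≤ 2 * Y.ncard * (#T * #T) := by nlinarith
    have : β ^ 2 ≤ 2 * Y.ncard := le_of_mul_le_mul_right this (by positivity)
    nlinarith

end Incidence

section Hairbrush

variable {F : Type*} [Field F] [Fintype F] {n : ℕ}

theorem sq_mul_card_le_ncard_inter_diff {β : ℝ} {K : ℕ} (hβ : 0 ≤ β) (hβK : β ≤ K)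
    {L : Finset (Set (Fin n → F))} {X : Set (Fin n → F)} (hL : ∀ l ∈ L, IsLine F l)
    (hplane : ∀ π, IsFlat F 2 π → {l | l ∈ L ∧ l ⊆ π}.ncard ≤ K)
    (hX : ∀ l ∈ L, β + 1 ≤ (l ∩ X).ncard) {l₀ π : Set (Fin n → F)} (hl₀ : IsLine F l₀)
    (hπ : IsFlat F 2 π) {T : Finset (Set (Fin n → F))} (hTL : T ⊆ L) (hl₀T : l₀ ∉ T)
    (hTπ : ∀ l ∈ T, l ⊆ π) :
    β ^ 2 * #T ≤ 2 * K * ((X ∩ π) \ l₀).ncard := by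
  refine sq_mul_card_le_of_inter_subsingleton _ _
    (fun l hl l' hl' => (hL l (hTL hl)).inter_subsingleton (hL l' (hTL hl')))
    (le_trans ?_ (hplane π hπ)) hβ hβK fun l hl => ?_
  · rw [← Set.ncard_coe_finset]
    exact Set.ncard_le_ncard fun l hl => ⟨hTL hl, hTπ l hl⟩
  · have hoff := ncard_inter_le_ncard_inter_diff_add_one
      ((hL l (hTL hl)).inter_subsingleton hl₀ (ne_of_mem_of_not_mem hl hl₀T)) X
    have hmono : (l ∩ (X \ l₀)).ncard ≤ (l ∩ ((X ∩ π) \ l₀)).ncard :=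
      Set.ncard_le_ncard fun y ⟨hyl, hyX, hy₀⟩ => ⟨hyl, ⟨hyX, hTπ l hl hyl⟩, hy₀⟩
    have hrich := hX l (hTL hl)
    have : ((l ∩ X).ncard : ℝ) ≤ (l ∩ ((X ∩ π) \ l₀)).ncard + 1 := by
      exact_mod_cast hoff.trans (by omega)
    linarith

theorem sq_mul_card_hairbrush_le {β : ℝ} {K : ℕ} (hβ : 0 ≤ β) (hβK : β ≤ K)
    {L : Finset (Set (Fin n → F))} {X : Set (Fin n → F)} (hL : ∀ l ∈ L, IsLine F l)
    (hplane : ∀ π, IsFlat F 2 π → {l | l ∈ L ∧ l ⊆ π}.ncard ≤ K)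
    (hX : ∀ l ∈ L, β + 1 ≤ (l ∩ X).ncard) {l₀ : Set (Fin n → F)} (hl₀ : l₀ ∈ L) :
    β ^ 2 * #(hairbrush L l₀) ≤ 2 * K * X.ncard := by
  classical
  set H := hairbrush L l₀
  have hplane_exists : ∀ l ∈ H, ∃ π, IsFlat F 2 π ∧ l₀ ⊆ π ∧ l ⊆ π := fun l hl => by
    obtain ⟨hlL, hne, x, hx₀, hx⟩ := mem_hairbrush.1 hl
    exact (hL l₀ hl₀).exists_isFlat_two (hL l hlL) hne.symm hx₀ hx
  choose! plane hflat hl₀_sub hl_sub using hplane_exists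
  set Y : Set (Fin n → F) → Set (Fin n → F) := fun π => (X ∩ π) \ l₀
  have hfiber : ∀ π ∈ H.image plane, β ^ 2 * #{l ∈ H | plane l = π} ≤ 2 * K * (Y π).ncard := by
    intro π hπ
    obtain ⟨l₁, hl₁, rfl⟩ := mem_image.1 hπ
    refine sq_mul_card_le_ncard_inter_diff hβ hβK hL hplane hX (hL l₀ hl₀) (hflat l₁ hl₁)
      ((filter_subset _ _).trans (hairbrush_subset L l₀)) (fun h => ?_) fun l hl => ?_
    · exact (mem_hairbrush.1 (mem_filter.1 h).1).2.1 rfl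
    · obtain ⟨hlH, hplane_eq⟩ := mem_filter.1 hl
      exact hplane_eq ▸ hl_sub l hlH
  have hdisj : (H.image plane : Set (Set (Fin n → F))).PairwiseDisjoint Y := by
    intro π hπ π' hπ' hne
    refine Set.disjoint_left.2 fun z hz hz' => hne ?_
    obtain ⟨l, hl, rfl⟩ := mem_image.1 hπ
    obtain ⟨l', hl', rfl⟩ := mem_image.1 hπ'
    exact (hflat l hl).eq_of_isLine_subset_of_mem (hL l₀ hl₀) (hflat l' hl') (hl₀_sub l hl)
      (hl₀_sub l' hl') hz.1.2 hz'.1.2 hz.2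
  have hYX : ∑ π ∈ H.image plane, (Y π).ncard ≤ X.ncard := by
    rw [← finsum_mem_coe_finset, ← Set.Finite.ncard_biUnion (finite_toSet _)
      (fun _ _ => Set.toFinite _) hdisj]
    exact Set.ncard_le_ncard
      (Set.iUnion₂_subset fun π _ => Set.sdiff_subset.trans Set.inter_subset_left)
  calc β ^ 2 * #H = ∑ π ∈ H.image plane, β ^ 2 * #{l ∈ H | plane l = π} := by
        rw [card_eq_sum_card_fiberwise fun l hl => mem_image_of_mem plane hl, Nat.cast_sum,
          mul_sum]
    _ ≤ ∑ π ∈ H.image plane, 2 * K * ((Y π).ncard : ℝ) := sum_le_sum hfiber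
    _ ≤ 2 * K * X.ncard := by
        rw [← mul_sum]
        gcongr
        exact_mod_cast hYX

end Hairbrush

/-- Either `I ≤ 2P`, or `I ^ 2 ≤ 2 k M P ≲ k P ^ 2 / q`; in the second case `k ≤ 3 q ^ 2` converts
`I ≳ k q` into `P ≳ k √q`. -/
lemma mul_sqrt_le_of_sq_le_mul {q k I P M : ℝ} (hq : 1 ≤ q) (hk : 0 ≤ k) (hkq : k ≤ 3 * q ^ 2)
    (hI : k * q / 200 ≤ I) (hP : 0 ≤ P) (hIP : I ^ 2 ≤ P * (I + k * M))
    (hMP : M * q ≤ 640000 * P) : k * √q ≤ 400000 * P := by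
  have hsqrt : √q ^ 2 = q := Real.sq_sqrt (by linarith)
  refine le_of_pow_le_pow_left₀ two_ne_zero (by positivity) ?_
  rw [mul_pow, hsqrt]
  have hI0 : 0 ≤ I := le_trans (by positivity) hI
  rcases le_or_gt I (2 * P) with h | h
  · have hkq : k * q ≤ 400 * P := by linarith
    nlinarith [mul_le_mul hkq hkq (by positivity) (by positivity)]
  · have hIM : I ^ 2 ≤ 2 * (k * M) * P := by nlinarith
    have hcube : k * q * (k * q) * q ≤ 40000 * (1280000 * k * P ^ 2) := by
      have : (k * q) ^ 2 ≤ (200 * I) ^ 2 := pow_le_pow_left₀ (by positivity) (by linarith) 2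
      nlinarith [mul_le_mul_of_nonneg_left hMP (by positivity : 0 ≤ 2 * k * P)]
    nlinarith

theorem stmt_12 :
    ∃ c : ℝ, 0 < c ∧
      ∀ (F : Type) [Field F] [Fintype F] (n : ℕ) (L : Finset (Set (Fin n → F)))
        (X : Set (Fin n → F)),
        (∀ l ∈ L, IsLine F l) →
        (∀ π : Set (Fin n → F), IsFlat F 2 π →
          ({l | l ∈ L ∧ l ⊆ π}).ncard ≤ 2 * Fintype.card F) →
        L.card ≤ 3 * (Fintype.card F) ^ 2 →
        (∀ l ∈ L, (Fintype.card F : ℝ) / 200 ≤ ((l ∩ X).ncard : ℝ)) →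
        c * L.card * Real.sqrt (Fintype.card F) ≤ (X.ncard : ℝ) := by
  refine ⟨1 / 10 ^ 7, by norm_num, fun F _ _ n L X hL hplane hLq hX => ?_⟩
  set q := Fintype.card F
  obtain rfl | ⟨l₁, hl₁⟩ := L.eq_empty_or_nonempty
  · simp
  have hXq : (q : ℝ) / 200 ≤ X.ncard :=
    (hX l₁ hl₁).trans (by exact_mod_cast Set.ncard_le_ncard Set.inter_subset_right)
  have hLq' : (#L : ℝ) ≤ 3 * q ^ 2 := by exact_mod_cast hLq
  -- For `q < 400` the bound `|X| ≥ q / 200` given by a single line already suffices.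
  rcases lt_or_ge q 400 with hq | hq
  · have hq' : (q : ℝ) ≤ 400 := by exact_mod_cast hq.le
    have hsqrt : √(q : ℝ) ≤ 20 := Real.sqrt_le_iff.2 ⟨by norm_num, by linarith⟩
    nlinarith [mul_le_mul hLq' hsqrt (Real.sqrt_nonneg _) (by positivity)]
  have hq' : (400 : ℝ) ≤ q := by exact_mod_cast hq
  obtain ⟨l₀, hl₀, hmax⟩ := exists_max_image L (fun l => #(hairbrush L l)) ⟨l₁, hl₁⟩
  have hI := card_nsmul_le_sum L (fun l => ((l ∩ X).ncard : ℝ)) _ hX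
  have hIP : (∑ l ∈ L, (l ∩ X).ncard) ^ 2 ≤ X.ncard * (∑ l ∈ L, (l ∩ X).ncard
      + #L * #(hairbrush L l₀)) := by
    refine (sq_sum_ncard_inter_le L X fun l hl l' hl' => (hL l hl).inter_subsingleton
      (hL l' hl')).trans (Nat.mul_le_mul_left _ ?_)
    rw [sum_add_distrib, ← smul_eq_mul, ← sum_const]
    exact Nat.add_le_add_left (sum_le_sum hmax) _
  have hbrush := sq_mul_card_hairbrush_le (β := q / 400) (K := 2 * q) (X := X) (by positivity)
    (by push_cast; linarith) hL hplane (fun l hl => by linarith [hX l hl]) hl₀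
  have hMP : (#(hairbrush L l₀) : ℝ) * q ≤ 640000 * X.ncard := by
    push_cast at hbrush
    nlinarith
  have := mul_sqrt_le_of_sq_le_mul (I := ∑ l ∈ L, ((l ∩ X).ncard : ℝ)) (by linarith)
    (Nat.cast_nonneg _) hLq' (by rw [nsmul_eq_mul] at hI; linarith) (Nat.cast_nonneg _)
    (by exact_mod_cast hIP) hMP
  linarith
end

section
/- Let L be a finite set of lines in F_q^n and X' ⊆ ⋃_{l∈L} l a set with ∑_{l∈L} |l ∩ X'| ≥ (99/100)·q·|L|. Then there exists a point x₁ ∈ X' such that at least half of the lines of L passing through x₁ satisfy |l ∩ X'| ≥ q/2. -/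
open Finset

lemma IsLine.ncard_eq {F : Type*} [Field F] [Fintype F] {n : ℕ} {l : Set (Fin n → F)}
    (hl : IsLine F l) : l.ncard = Fintype.card F := by
  obtain ⟨a, v, hv, rfl⟩ := hl
  have hrange : {x | ∃ t : F, x = a + t • v} = Set.range (fun t : F => a + t • v) := by
    ext x; simp [eq_comm]
  rw [hrange, Set.ncard_range_of_injective, Nat.card_eq_fintype_card]
  exact fun s t hst => smul_left_injective F hv (add_left_cancel hst)

open scoped Classical in
lemma sum_ncard_inter_nsmul {α M : Type*} [AddCommMonoid M] (X : Finset α)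
    (L : Finset (Set α)) (w : Set α → M) :
    ∑ l ∈ L, (l ∩ X).ncard • w l = ∑ x ∈ X, ∑ l ∈ L with x ∈ l, w l := by
  have hcard (l : Set α) : (l ∩ X).ncard = #{x ∈ X | x ∈ l} := by
    rw [← Set.ncard_coe_finset, coe_filter, Set.inter_comm]; rfl
  simp_rw [hcard, ← sum_const, sum_filter]
  exact sum_comm

lemma sum_le_of_two_mul_card_filter_le {ι : Type*} (s : Finset ι) (f : ι → ℝ) (q : ℝ)
    (hq : 0 ≤ q) (hf : ∀ i ∈ s, f i ≤ q) (hrich : 2 * #{i ∈ s | q / 2 ≤ f i} ≤ #s) :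
    ∑ i ∈ s, f i ≤ 3 / 4 * q * #s := by
  have hrich_sum : ∑ i ∈ s with q / 2 ≤ f i, f i ≤ #{i ∈ s | q / 2 ≤ f i} * q := by
    rw [← nsmul_eq_mul, ← sum_const]
    exact sum_le_sum fun i hi => hf i (mem_filter.mp hi).1
  have hpoor_sum : ∑ i ∈ s with ¬q / 2 ≤ f i, f i ≤ #{i ∈ s | ¬q / 2 ≤ f i} * (q / 2) := by
    rw [← nsmul_eq_mul, ← sum_const]
    exact sum_le_sum fun i hi => (not_le.mp (mem_filter.mp hi).2).le
  have hcard : (#{i ∈ s | q / 2 ≤ f i} : ℝ) + #{i ∈ s | ¬q / 2 ≤ f i} = #s := by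
    exact_mod_cast card_filter_add_card_filter_not _
  have hrich' : 2 * (#{i ∈ s | q / 2 ≤ f i} : ℝ) ≤ #s := by exact_mod_cast hrich
  rw [← sum_filter_add_sum_filter_not s (fun i => q / 2 ≤ f i)]
  nlinarith

lemma sum_le_card_mul_of_sum_sq_le {ι : Type*} (s : Finset ι) (f : ι → ℝ) (c : ℝ)
    (hc : 0 ≤ c) (hsq : ∑ i ∈ s, f i ^ 2 ≤ c * ∑ i ∈ s, f i) :
    ∑ i ∈ s, f i ≤ c * #s := by
  rcases le_or_gt (∑ i ∈ s, f i) 0 with hneg | hpos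
  · exact hneg.trans (by positivity)
  · have hCS := sq_sum_le_card_mul_sum_sq (s := s) (f := f)
    nlinarith

open scoped Classical in
/-- Otherwise every point of `X` lies on more poor lines (`|l ∩ X| < q/2`) than rich ones, which caps
`∑ |l ∩ X|² = ∑_{x ∈ X} ∑_{l ∋ x} |l ∩ X|` at `(3/4) q ∑ |l ∩ X|`; Cauchy–Schwarz then caps
`∑ |l ∩ X|` at `(3/4) q |L|`. -/
lemma exists_mem_card_le_two_mul_card_rich {α : Type*} (X : Set α) (hX : X.Finite)
    (L : Finset (Set α)) (q : ℕ) (hq : ∀ l ∈ L, (l ∩ X).ncard ≤ q)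
    (hsum : 3 / 4 * q * #L < ∑ l ∈ L, ((l ∩ X).ncard : ℝ)) :
    ∃ x ∈ X, #{l ∈ L | x ∈ l} ≤ 2 * #{l ∈ L | x ∈ l ∧ (q : ℝ) / 2 ≤ (l ∩ X).ncard} := by
  by_contra! hpoor
  set I : Set α → ℝ := fun l => ((l ∩ X).ncard : ℝ)
  set Xf := hX.toFinset
  have hXf : (Xf : Set α) = X := hX.coe_toFinset
  have hpoint (x : α) (hx : x ∈ Xf) :
      ∑ l ∈ L with x ∈ l, I l ≤ 3 / 4 * q * #{l ∈ L | x ∈ l} := by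
    refine sum_le_of_two_mul_card_filter_le _ I q q.cast_nonneg
      (fun l hl => Nat.cast_le.mpr (hq l (mem_filter.mp hl).1)) ?_
    rw [filter_filter]
    exact (hpoor x (hX.mem_toFinset.mp hx)).le
  have hsq : ∑ l ∈ L, I l ^ 2 ≤ 3 / 4 * q * ∑ l ∈ L, I l := calc
    ∑ l ∈ L, I l ^ 2 = ∑ x ∈ Xf, ∑ l ∈ L with x ∈ l, I l := by
      simpa [sq, hXf, I] using sum_ncard_inter_nsmul Xf L I
    _ ≤ ∑ x ∈ Xf, 3 / 4 * q * (#{l ∈ L | x ∈ l} : ℝ) := sum_le_sum hpoint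
    _ = 3 / 4 * q * ∑ l ∈ L, I l := by
      rw [← mul_sum]
      congr 1
      simpa [hXf, I] using (sum_ncard_inter_nsmul Xf L fun _ => (1 : ℝ)).symm
  exact (sum_le_card_mul_of_sum_sq_le L I _ (by positivity) hsq).not_gt hsum

theorem stmt_16_general {F : Type*} [Field F] [Fintype F] {n : ℕ}
    (L : Finset (Set (Fin n → F))) (hLne : L.Nonempty)
    (hL : ∀ l ∈ L, IsLine F l)
    (X' : Set (Fin n → F))
    (hsum : (99 : ℝ) / 100 * (Fintype.card F : ℝ) * L.card ≤
      ∑ l ∈ L, ((l ∩ X').ncard : ℝ)) :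
    ∃ x₁ ∈ X',
      ({l | l ∈ L ∧ x₁ ∈ l}).ncard ≤
        2 * ({l | l ∈ L ∧ x₁ ∈ l ∧
              (Fintype.card F : ℝ) / 2 ≤ ((l ∩ X').ncard : ℝ)}).ncard := by
  classical
  have hqL : 0 < (Fintype.card F : ℝ) * L.card := by
    have := hLne.card_pos
    have : 0 < Fintype.card F := Fintype.card_pos
    positivity
  obtain ⟨x, hx, hrich⟩ := exists_mem_card_le_two_mul_card_rich X' X'.toFinite L
    (Fintype.card F) (fun l hl => (Set.ncard_inter_le_ncard_left _ _).trans (hL l hl).ncard_eq.le)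
    (by linarith)
  refine ⟨x, hx, ?_⟩
  simpa only [← coe_filter, Set.ncard_coe_finset] using hrich

theorem stmt_16 {F : Type*} [Field F] [Fintype F] {n : ℕ}
    (L : Finset (Set (Fin n → F))) (hLne : L.Nonempty)
    (hL : ∀ l ∈ L, IsLine F l)
    (X' : Set (Fin n → F)) (hsub : X' ⊆ ⋃ l ∈ L, l)
    (hsum : (99 : ℝ) / 100 * (Fintype.card F : ℝ) * L.card ≤
      ∑ l ∈ L, ((l ∩ X').ncard : ℝ)) :
    ∃ x₁ ∈ X',
      ({l | l ∈ L ∧ x₁ ∈ l}).ncard ≤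
        2 * ({l | l ∈ L ∧ x₁ ∈ l ∧
              (Fintype.card F : ℝ) / 2 ≤ ((l ∩ X').ncard : ℝ)}).ncard :=
  stmt_16_general L hLne hL X' hsum
end
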